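/- The fracture square (Theorem 2.5(6) of the paper, stated objectwise): assume in addition that C has binary biproducts. Let X be an object of C with a torsion decomposition ΓX → X → LX → ΓX⟦1⟧ and a completion decomposition ΔX → X → ΛX → ΔX⟦1⟧, and let Γ' → ΛX → L' → Γ'⟦1⟧ be a torsion decomposition of ΛX (so L' plays the role of LΛX). Then: (a) there is a unique morphism φ : LX → L' such that φ composed with X → LX equals the composite X → ΛX → L'; (b) there exists a morphism δ : L' → X⟦1⟧ such that the triangle X → ΛX ⊕ LX → L' → X⟦1⟧ is distinguished, where the first morphism has components X → ΛX and X → LX, and the second morphism is the difference of the canonical morphism ΛX → L' and φ. In other words, the commutative square with vertices X, ΛX, LX, L' is homotopy cartesian. -/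

import Mathlib

/-!
Let `Z` be the cone of `(e, b) : X ⟶ ΛX ⊞ LX`. For `W ∈ T`, the functor `Hom(W, -)` turns `e` into
a bijection (its fibre `ΔX` lies in `T^⊥`) and kills `LX`, so it turns `(e, b)` into a bijection
and the long exact sequence gives `Z ∈ T^⊥`. Maps from the middle term of a triangle whose first
term lies in `T` to an object of `T^⊥` extend uniquely over the third term; this yields `φ`, a map
`Z ⟶ L'` extending `(l, -φ)` and a map `L' ⟶ Z` extending `ΛX ⟶ ΛX ⊞ LX ⟶ Z`. The same uniqueness
(and its analogue for `ΛX ⊞ LX ⟶ Z`) shows that they are mutually inverse.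
-/
open CategoryTheory CategoryTheory.Limits CategoryTheory.Pretriangulated

universe v u

variable {C : Type u} [Category.{v} C] [HasZeroObject C] [HasShift C ℤ]
  [Preadditive C] [∀ n : ℤ, (shiftFunctor C n).Additive] [Pretriangulated C]

/-- The orthogonal `T^⊥` of a class of objects `T`: all objects `Y` such that every
morphism `X⟦n⟧ ⟶ Y` with `X ∈ T` is zero. -/
def orth (T : Set C) : Set C :=
  {Y | ∀ X ∈ T, ∀ n : ℤ, ∀ f : X⟦n⟧ ⟶ Y, f = 0}

/-- A triangulated subcategory of `C`, given as a class of objects containing the zero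
objects, closed under isomorphism, shifts, and extensions. -/
structure TriangulatedSub (C : Type u) [Category.{v} C] [HasZeroObject C] [HasShift C ℤ]
    [Preadditive C] [∀ n : ℤ, (shiftFunctor C n).Additive] [Pretriangulated C] where
  P : Set C
  zero_mem : ∀ X : C, IsZero X → X ∈ P
  iso_closed : ∀ ⦃X Y : C⦄, (X ≅ Y) → X ∈ P → Y ∈ P
  shift_closed : ∀ (X : C) (n : ℤ), X ∈ P → X⟦n⟧ ∈ P
  ext_closed : ∀ (Tr : Triangle C), (Tr ∈ distTriang C) → Tr.obj₁ ∈ P → Tr.obj₃ ∈ P → Tr.obj₂ ∈ P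

section Orthogonal

variable {S : Set C}

omit [HasZeroObject C] [∀ n : ℤ, (shiftFunctor C n).Additive] [Pretriangulated C] in
lemma hom_eq_zero_of_mem_orth {Y W : C} (hY : Y ∈ orth S) (hW : W ∈ S) (f : W ⟶ Y) : f = 0 := by
  simpa using hY W hW 0 ((shiftFunctorZero C ℤ).hom.app W ≫ f)

omit [HasZeroObject C] [Pretriangulated C] in
lemma shift_mem_orth {Y : C} (hY : Y ∈ orth S) (m : ℤ) : Y⟦m⟧ ∈ orth S := by
  intro W hW n f
  have h := hY W hW (n + -m) ((shiftFunctorAdd C n (-m)).hom.app W ≫ f⟦-m⟧' ≫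
    (shiftFunctorCompIsoId C m (-m) (add_neg_cancel m)).hom.app Y)
  apply (shiftFunctor C (-m)).map_injective
  simpa using h

variable {A B Z : C} {u : A ⟶ B} {v : B ⟶ Z} {w : Z ⟶ A⟦(1 : ℤ)⟧}
  (h : Triangle.mk u v w ∈ distTriang C)
include h

lemma exists_mor₂_comp_eq_of_mem_orth (hA : A ∈ S) {Y : C} (hY : Y ∈ orth S) (f : B ⟶ Y) :
    ∃ g, v ≫ g = f := by
  obtain ⟨g, hg⟩ := Triangle.yoneda_exact₂ _ h f (hom_eq_zero_of_mem_orth hY hA _)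
  exact ⟨g, hg.symm⟩

lemma mor₂_cancel_of_mem_orth (hA : A ∈ S) {Y : C} (hY : Y ∈ orth S) {g₁ g₂ : Z ⟶ Y}
    (hg : v ≫ g₁ = v ≫ g₂) : g₁ = g₂ := by
  obtain ⟨k, hk : g₁ - g₂ = w ≫ k⟩ := Triangle.yoneda_exact₃ _ h (g₁ - g₂)
    (show v ≫ (g₁ - g₂) = 0 by rw [Preadditive.comp_sub, hg, sub_self])
  rw [hY A hA 1 k, comp_zero] at hk
  exact sub_eq_zero.mp hk

lemma exists_comp_mor₁_eq_of_mem_orth (hZ : Z ∈ orth S) {W : C} (hW : W ∈ S) (f : W ⟶ B) :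
    ∃ g, g ≫ u = f := by
  obtain ⟨g, hg⟩ := Triangle.coyoneda_exact₂ _ h f (hom_eq_zero_of_mem_orth hZ hW _)
  exact ⟨g, hg.symm⟩

lemma eq_zero_of_comp_shift_mor₁_eq_zero (hZ : Z ∈ orth S) {W : C} (hW : W ∈ S)
    {g : W ⟶ A⟦(1 : ℤ)⟧} (hg : g ≫ u⟦1⟧' = 0) : g = 0 := by
  obtain ⟨k, hk⟩ := Triangle.coyoneda_exact₁ _ h g hg
  rw [hk, hom_eq_zero_of_mem_orth hZ hW k]
  exact zero_comp

end Orthogonal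

lemma mk_comp_iso_mem_distTriang {X Y Z Z' : C} {u : X ⟶ Y} {v : Y ⟶ Z}
    {w : Z ⟶ X⟦(1 : ℤ)⟧} (h : Triangle.mk u v w ∈ distTriang C) (θ : Z ≅ Z') :
    Triangle.mk u (v ≫ θ.hom) (θ.inv ≫ w) ∈ distTriang C :=
  isomorphic_distinguished _ h _ (Triangle.isoMk _ _ (Iso.refl _) (Iso.refl _) θ.symm
    (by change u ≫ 𝟙 Y = 𝟙 X ≫ u; simp)
    (by change (v ≫ θ.hom) ≫ θ.inv = 𝟙 Y ≫ v; simp)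
    (by change (θ.inv ≫ w) ≫ (𝟙 X)⟦(1 : ℤ)⟧' = θ.inv ≫ w; simp))

lemma cone_mem_orth (T : TriangulatedSub C) {A B Z : C} {u : A ⟶ B} {v : B ⟶ Z}
    {w : Z ⟶ A⟦(1 : ℤ)⟧} (h : Triangle.mk u v w ∈ distTriang C)
    (hsurj : ∀ W ∈ T.P, ∀ f : W ⟶ B, ∃ g, g ≫ u = f)
    (hinj : ∀ W ∈ T.P, ∀ g : W ⟶ A⟦(1 : ℤ)⟧, g ≫ u⟦1⟧' = 0 → g = 0) : Z ∈ orth T.P := by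
  have hwu : w ≫ u⟦1⟧' = 0 := comp_distTriang_mor_zero₃₁ _ h
  have huv : u ≫ v = 0 := comp_distTriang_mor_zero₁₂ _ h
  intro W hW n ψ
  have hW' := T.shift_closed W n hW
  obtain ⟨α, hα⟩ := Triangle.coyoneda_exact₃ _ h ψ <| hinj _ hW' _ <|
    show (ψ ≫ w) ≫ u⟦1⟧' = 0 by rw [Category.assoc, hwu, comp_zero]
  obtain ⟨β, hβ⟩ := hsurj _ hW' α
  calc ψ = (β ≫ u) ≫ v := by rw [hβ]; exact hα
    _ = 0 := by rw [Category.assoc, huv, comp_zero]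

lemma biprod_lift_cone_mem_orth (T : TriangulatedSub C) {X Δ Λ L Z : C} [HasBinaryBiproduct Λ L]
    {d : Δ ⟶ X} {e : X ⟶ Λ} {f : Λ ⟶ Δ⟦(1 : ℤ)⟧} (he : Triangle.mk d e f ∈ distTriang C)
    (hΔ : Δ ∈ orth T.P) {b : X ⟶ L} (hL : L ∈ orth T.P) {v : Λ ⊞ L ⟶ Z}
    {w : Z ⟶ X⟦(1 : ℤ)⟧} (h : Triangle.mk (biprod.lift e b) v w ∈ distTriang C) :
    Z ∈ orth T.P := by
  have he' : Triangle.mk e f (-d⟦(1 : ℤ)⟧') ∈ distTriang C := rot_of_distTriang _ he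
  have hΔ₁ := shift_mem_orth hΔ 1
  refine cone_mem_orth T h (fun W hW α ↦ ?_) (fun W hW g hg ↦ ?_)
  · obtain ⟨β, hβ⟩ := exists_comp_mor₁_eq_of_mem_orth he' hΔ₁ hW (α ≫ biprod.fst)
    refine ⟨β, biprod.hom_ext _ _ (by simpa using hβ) ?_⟩
    simp [hom_eq_zero_of_mem_orth hL hW]
  · apply eq_zero_of_comp_shift_mor₁_eq_zero he' hΔ₁ hW
    simpa [← CategoryTheory.Functor.map_comp] using hg =≫ biprod.fst⟦(1 : ℤ)⟧'

lemma cone_mor₂_cancel_of_mem_orth {S : Set C} {Γ X L B Z Y : C} {a : Γ ⟶ X} {b : X ⟶ L}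
    {c : L ⟶ Γ⟦(1 : ℤ)⟧} (hb : Triangle.mk a b c ∈ distTriang C) (hΓ : Γ ∈ S)
    {u : X ⟶ B} {p : B ⟶ L} (hub : u ≫ p = b) {v : B ⟶ Z} {w : Z ⟶ X⟦(1 : ℤ)⟧}
    (h : Triangle.mk u v w ∈ distTriang C) (hY : Y ∈ orth S) {g₁ g₂ : Z ⟶ Y}
    (hg : v ≫ g₁ = v ≫ g₂) : g₁ = g₂ := by
  -- every map `X⟦1⟧ ⟶ Y` factors through `b⟦1⟧`, which `w` kills because `b` factors through `u`
  have hb' : Triangle.mk c (-a⟦(1 : ℤ)⟧') (-b⟦(1 : ℤ)⟧') ∈ distTriang C :=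
    rot_of_distTriang _ (rot_of_distTriang _ hb)
  have hwb : w ≫ b⟦(1 : ℤ)⟧' = 0 := by
    have hwu : w ≫ u⟦(1 : ℤ)⟧' = 0 := comp_distTriang_mor_zero₃₁ _ h
    rw [← hub, CategoryTheory.Functor.map_comp, ← Category.assoc, hwu, zero_comp]
  obtain ⟨k, hk : g₁ - g₂ = w ≫ k⟩ := Triangle.yoneda_exact₃ _ h (g₁ - g₂)
    (show v ≫ (g₁ - g₂) = 0 by rw [Preadditive.comp_sub, hg, sub_self])
  obtain ⟨(m : L⟦(1 : ℤ)⟧ ⟶ Y), hm : k = (-b⟦(1 : ℤ)⟧') ≫ m⟩ :=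
    Triangle.yoneda_exact₃ _ hb' k (show (-a⟦(1 : ℤ)⟧') ≫ k = 0 from hY Γ hΓ 1 _)
  rw [← sub_eq_zero, hk, hm, Preadditive.neg_comp, Preadditive.comp_neg, ← Category.assoc, hwb,
    zero_comp, neg_zero]

lemma exists_iso_cone_biprod_lift (T : TriangulatedSub C) {Γ X L Λ Γ' L' Z : C}
    [HasBinaryBiproduct Λ L] {a : Γ ⟶ X} {b : X ⟶ L} {c : L ⟶ Γ⟦(1 : ℤ)⟧}
    (hb : Triangle.mk a b c ∈ distTriang C) (hΓ : Γ ∈ T.P) {e : X ⟶ Λ}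
    {g : Γ' ⟶ Λ} {l : Λ ⟶ L'} {k : L' ⟶ Γ'⟦(1 : ℤ)⟧} (hl : Triangle.mk g l k ∈ distTriang C)
    (hΓ' : Γ' ∈ T.P) (hL' : L' ∈ orth T.P) {φ : L ⟶ L'} (hφ : b ≫ φ = e ≫ l)
    {v : Λ ⊞ L ⟶ Z} {w : Z ⟶ X⟦(1 : ℤ)⟧} (h : Triangle.mk (biprod.lift e b) v w ∈ distTriang C)
    (hZ : Z ∈ orth T.P) : ∃ θ : Z ≅ L', v ≫ θ.hom = biprod.desc l (-φ) := by
  have huv : biprod.lift e b ≫ v = 0 := comp_distTriang_mor_zero₁₂ _ h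
  obtain ⟨(θ : Z ⟶ L'), hθ : biprod.desc l (-φ) = v ≫ θ⟩ := Triangle.yoneda_exact₂ _ h _
    (show biprod.lift e b ≫ biprod.desc l (-φ) = 0 by simp [hφ])
  obtain ⟨θ', hθ'⟩ := exists_mor₂_comp_eq_of_mem_orth hl hΓ' hZ (biprod.inl ≫ v)
  have hinr : biprod.inr ≫ v = -φ ≫ θ' := by
    apply mor₂_cancel_of_mem_orth hb hΓ hZ
    have hlift : biprod.lift e b = e ≫ biprod.inl + b ≫ biprod.inr := by ext <;> simp
    rw [hlift, Preadditive.add_comp, Category.assoc, Category.assoc, ← hθ',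
      add_eq_zero_iff_neg_eq] at huv
    rw [← huv, ← reassoc_of% hφ, Preadditive.comp_neg]
  have hdesc : biprod.desc l (-φ) ≫ θ' = v := by
    ext
    · simpa using hθ'
    · simpa using hinr.symm
  refine ⟨⟨θ, θ', ?_, ?_⟩, hθ.symm⟩
  · exact cone_mor₂_cancel_of_mem_orth hb hΓ (biprod.lift_snd e b) h hZ
      (by rw [← Category.assoc, ← hθ, hdesc, Category.comp_id])
  · exact mor₂_cancel_of_mem_orth hl hΓ' hL'
      (by rw [← Category.assoc, hθ', Category.assoc, ← hθ, biprod.inl_desc, Category.comp_id])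

theorem fracture_square_general [HasBinaryBiproducts C] (T : TriangulatedSub C) (X : C)
    (ΓX LX : C) (a : ΓX ⟶ X) (b : X ⟶ LX) (c : LX ⟶ ΓX⟦(1 : ℤ)⟧)
    (hXdt : Triangle.mk a b c ∈ distTriang C) (hΓ : ΓX ∈ T.P) (hL : LX ∈ orth T.P)
    (ΔX ΛX : C) (d : ΔX ⟶ X) (e : X ⟶ ΛX) (f : ΛX ⟶ ΔX⟦(1 : ℤ)⟧)
    (hXdt' : Triangle.mk d e f ∈ distTriang C) (hΔ : ΔX ∈ orth T.P)
    (Γ' L' : C) (g : Γ' ⟶ ΛX) (l : ΛX ⟶ L') (k : L' ⟶ Γ'⟦(1 : ℤ)⟧)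
    (hΛdt : Triangle.mk g l k ∈ distTriang C) (hΓ' : Γ' ∈ T.P) (hL' : L' ∈ orth T.P) :
    (∃! φ : LX ⟶ L', b ≫ φ = e ≫ l) ∧
    (∀ φ : LX ⟶ L', b ≫ φ = e ≫ l →
      ∃ δ : L' ⟶ X⟦(1 : ℤ)⟧,
        Triangle.mk (biprod.lift e b) (biprod.desc l (-φ)) δ ∈ distTriang C) := by
  obtain ⟨φ₀, hφ₀⟩ := exists_mor₂_comp_eq_of_mem_orth hXdt hΓ hL' (e ≫ l)
  refine ⟨⟨φ₀, hφ₀, fun φ hφ ↦ mor₂_cancel_of_mem_orth hXdt hΓ hL' (hφ.trans hφ₀.symm)⟩,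
    fun φ hφ ↦ ?_⟩
  obtain ⟨Z, v, w, hZ⟩ := distinguished_cocone_triangle (biprod.lift e b)
  obtain ⟨θ, hθ⟩ := exists_iso_cone_biprod_lift T hXdt hΓ hΛdt hΓ' hL' hφ hZ
    (biprod_lift_cone_mem_orth T hXdt' hΔ hL hZ)
  exact ⟨θ.inv ≫ w, hθ ▸ mk_comp_iso_mem_distTriang hZ θ⟩

/-- The fracture square (objectwise): there is a unique `φ : LX ⟶ L'` compatible with the
decompositions, and the square with vertices `X`, `ΛX`, `LX`, `L'` is homotopy cartesian:
the triangle `X ⟶ ΛX ⊞ LX ⟶ L' ⟶ X⟦1⟧` is distinguished. -/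
theorem fracture_square [HasBinaryBiproducts C] (T : TriangulatedSub C) (X : C)
    (ΓX LX : C) (a : ΓX ⟶ X) (b : X ⟶ LX) (c : LX ⟶ ΓX⟦(1 : ℤ)⟧)
    (hXdt : Triangle.mk a b c ∈ distTriang C) (hΓ : ΓX ∈ T.P) (hL : LX ∈ orth T.P)
    (ΔX ΛX : C) (d : ΔX ⟶ X) (e : X ⟶ ΛX) (f : ΛX ⟶ ΔX⟦(1 : ℤ)⟧)
    (hXdt' : Triangle.mk d e f ∈ distTriang C) (hΔ : ΔX ∈ orth T.P)
    (hΛ : ΛX ∈ orth (orth T.P))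
    (Γ' L' : C) (g : Γ' ⟶ ΛX) (l : ΛX ⟶ L') (k : L' ⟶ Γ'⟦(1 : ℤ)⟧)
    (hΛdt : Triangle.mk g l k ∈ distTriang C) (hΓ' : Γ' ∈ T.P) (hL' : L' ∈ orth T.P) :
    (∃! φ : LX ⟶ L', b ≫ φ = e ≫ l) ∧
    (∀ φ : LX ⟶ L', b ≫ φ = e ≫ l →
      ∃ δ : L' ⟶ X⟦(1 : ℤ)⟧,
        Triangle.mk (biprod.lift e b) (biprod.desc l (-φ)) δ ∈ distTriang C) :=
  fracture_square_general T X ΓX LX a b c hXdt hΓ hL ΔX ΛX d e f hXdt' hΔ Γ' L' g l k hΛdt hΓ' hL'
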